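/- With the nilpotent power function a^p = ∑_{j=0}^{n} (N^j/j!)(-1)^j(-p)_j a₀^(p-j) defined for a = a₀ + N with a₀ > 0 and N^(n+1) = 0 in a commutative ℝ-algebra, one has (a^p)^q = a^(pq) for all real p, q, where the body of a^p is a₀^p > 0 so the outer power is well defined. -/

import Mathlib

/-- Truncated binomial-series power `a ^ p` for an element `a = a₀·1 + K` of a commutative
`ℝ`-algebra, with positive real body `a₀` and nilpotent part `K` satisfying `K ^ (n+1) = 0`:
`a ^ p = ∑_{j=0}^{n} (K^j / j!) · (-1)^j · (-p)_j · a₀ ^ (p - j)`,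
where `(q)_j` is the rising Pochhammer symbol. -/
noncomputable def superPow {A : Type*} [CommRing A] [Algebra ℝ A] (n : ℕ)
    (x₀ : ℝ) (K : A) (p : ℝ) : A :=
  ∑ j ∈ Finset.range (n + 1),
    (((-1 : ℝ) ^ j * (ascPochhammer ℝ j).eval (-p) * x₀ ^ (p - (j : ℝ))) / (j.factorial : ℝ))
      • K ^ j

/-!
Factoring out the body, `superPow n a₀ N p = a₀ ^ p • superPow n 1 (a₀⁻¹ • N) p`, reduces the
theorem to the unit-body case, where `superPow n 1 K p = ∑ j ≤ n, (p choose j) • K ^ j` is the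
truncated binomial series of `(1 + K) ^ p`. There both sides of
`((1 + K) ^ p) ^ q = (1 + K) ^ (p q)` are polynomial functions of `p` and of `q` with
coefficients in `A`, and for natural `p, q` the identity is the binomial theorem. A polynomial
with coefficients in a real vector space that vanishes at every natural number vanishes
identically (apply linear functionals), so the identity extends first to real `q`, then to
real `p`.
-/

open Finset Polynomial

open scoped Nat

lemma descPochhammer_eval_eq_factorial_mul_choose {R : Type*} [CommRing R] [BinomialRing R]
    (r : R) (j : ℕ) : (descPochhammer R j).eval r = j ! * Ring.choose r j := by
  rw [← descPochhammer_map (algebraMap ℤ R), ← eval₂_eq_eval_map, ← aeval_def,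
    aeval_eq_smeval, Ring.descPochhammer_eq_factorial_smul_choose, nsmul_eq_mul]

section PolynomialMap

variable {K A : Type*} [Field K] [CommRing A] [Algebra K A]

def IsPolynomialMap (f : K → A) : Prop :=
  ∃ P : A[X], ∀ x, f x = P.eval (algebraMap K A x)

namespace IsPolynomialMap

variable {f g : K → A}

lemma const (a : A) : IsPolynomialMap fun _ : K => a :=
  ⟨C a, fun _ => eval_C.symm⟩

lemma algebraMap_eval (Q : K[X]) : IsPolynomialMap fun x => algebraMap K A (Q.eval x) :=
  ⟨Q.map (algebraMap K A), fun x => by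
    rw [eval_map_algebraMap, aeval_algebraMap_apply_eq_algebraMap_eval]⟩

lemma add (hf : IsPolynomialMap f) (hg : IsPolynomialMap g) :
    IsPolynomialMap fun x => f x + g x := by
  obtain ⟨P, hP⟩ := hf
  obtain ⟨Q, hQ⟩ := hg
  exact ⟨P + Q, fun x => by simp [hP, hQ]⟩

lemma sub (hf : IsPolynomialMap f) (hg : IsPolynomialMap g) :
    IsPolynomialMap fun x => f x - g x := by
  obtain ⟨P, hP⟩ := hf
  obtain ⟨Q, hQ⟩ := hg
  exact ⟨P - Q, fun x => by simp [hP, hQ]⟩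

lemma mul (hf : IsPolynomialMap f) (hg : IsPolynomialMap g) :
    IsPolynomialMap fun x => f x * g x := by
  obtain ⟨P, hP⟩ := hf
  obtain ⟨Q, hQ⟩ := hg
  exact ⟨P * Q, fun x => by simp [hP, hQ]⟩

lemma pow (hf : IsPolynomialMap f) (m : ℕ) : IsPolynomialMap fun x => f x ^ m := by
  obtain ⟨P, hP⟩ := hf
  exact ⟨P ^ m, fun x => by simp [hP]⟩

lemma sum {ι : Type*} (s : Finset ι) {f : ι → K → A}
    (hf : ∀ i ∈ s, IsPolynomialMap (f i)) :
    IsPolynomialMap fun x => ∑ i ∈ s, f i x := by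
  classical
  induction s using Finset.induction_on with
  | empty => simpa using const (0 : A)
  | insert i s hi ih =>
    simp only [sum_insert hi]
    exact (hf i (mem_insert_self i s)).add (ih fun j hj => hf j (mem_insert_of_mem hj))

lemma comp_mul (hf : IsPolynomialMap f) (c : K) : IsPolynomialMap fun x => f (c * x) := by
  obtain ⟨P, hP⟩ := hf
  exact ⟨P.comp (C (algebraMap K A c) * X), fun x => by simp [hP]⟩

lemma const_smul (hf : IsPolynomialMap f) (c : K) : IsPolynomialMap fun x => c • f x := by
  simp only [Algebra.smul_def]
  exact (const (algebraMap K A c)).mul hf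

lemma choose_smul [CharZero K] (j : ℕ) (v : A) :
    IsPolynomialMap fun x : K => Ring.choose x j • v := by
  have hchoose (x : K) : Ring.choose x j = (C (j ! : K)⁻¹ * descPochhammer K j).eval x := by
    rw [eval_mul, eval_C, descPochhammer_eval_eq_factorial_mul_choose,
      inv_mul_cancel_left₀ (Nat.cast_ne_zero.mpr j.factorial_ne_zero)]
  simp only [hchoose, Algebra.smul_def]
  exact (algebraMap_eval _).mul (const v)

lemma eq_of_natCast [CharZero K] (hf : IsPolynomialMap f) (hg : IsPolynomialMap g)
    (h : ∀ k : ℕ, f k = g k) : f = g := by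
  obtain ⟨P, hP⟩ := hf.sub hg
  simp only at hP
  funext x
  rw [← sub_eq_zero, hP, ← Module.forall_dual_apply_eq_zero_iff K]
  intro ℓ
  set Q : K[X] := ∑ m ∈ range (P.natDegree + 1), monomial m (ℓ (P.coeff m))
  have hQ : ∀ y, ℓ (P.eval (algebraMap K A y)) = Q.eval y := by
    intro y
    rw [eval_eq_sum_range, map_sum, eval_finsetSum]
    refine sum_congr rfl fun m _ => ?_
    rw [eval_monomial, ← map_pow, mul_comm, ← Algebra.smul_def, map_smul, smul_eq_mul, mul_comm]
  have hQ0 : Q = 0 := by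
    refine eq_zero_of_infinite_isRoot Q
      ((Set.infinite_range_of_injective Nat.cast_injective).mono ?_)
    rintro _ ⟨m, rfl⟩
    rw [Set.mem_ofPred_eq, IsRoot, ← hQ, ← hP, h m, sub_self, map_zero]
  rw [hQ, hQ0, eval_zero]

end IsPolynomialMap

end PolynomialMap

section superPow

variable {A : Type*} [CommRing A] [Algebra ℝ A] {n : ℕ}

lemma superPow_eq_sum_choose (x₀ : ℝ) (K : A) (p : ℝ) :
    superPow n x₀ K p
      = ∑ j ∈ range (n + 1), (Ring.choose p j * x₀ ^ (p - (j : ℝ)) : ℝ) • K ^ j := by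
  refine sum_congr rfl fun j _ => congrArg (· • K ^ j) ?_
  have hsign : (-1 : ℝ) ^ j * (-1) ^ j = 1 := by rw [← mul_pow]; norm_num
  rw [ascPochhammer_eval_neg_eq_descPochhammer, descPochhammer_eval_eq_factorial_mul_choose]
  field_simp
  linear_combination (Ring.choose p j * x₀ ^ (p - j)) * hsign

lemma superPow_one_eq_sum_choose (K : A) (p : ℝ) :
    superPow n 1 K p = ∑ j ∈ range (n + 1), Ring.choose p j • K ^ j := by
  simp only [superPow_eq_sum_choose, Real.one_rpow, mul_one]

lemma superPow_eq_rpow_smul {x₀ : ℝ} (hx₀ : 0 < x₀) (K : A) (p : ℝ) :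
    superPow n x₀ K p = x₀ ^ p • superPow n 1 (x₀⁻¹ • K) p := by
  simp only [superPow_eq_sum_choose, Real.one_rpow, mul_one, smul_sum, _root_.smul_pow, smul_smul]
  refine sum_congr rfl fun j _ => ?_
  rw [Real.rpow_sub hx₀, Real.rpow_natCast, inv_pow, div_eq_mul_inv]
  ring_nf

lemma superPow_one_natCast {K : A} (hK : K ^ (n + 1) = 0) (k : ℕ) :
    superPow n 1 K k = (1 + K) ^ k := by
  rw [superPow_one_eq_sum_choose, add_comm (1 : A) K, add_pow]
  calc ∑ j ∈ range (n + 1), Ring.choose (k : ℝ) j • K ^ j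
      = ∑ j ∈ range (n + k + 1), Ring.choose (k : ℝ) j • K ^ j := by
        refine sum_subset (range_subset_range.mpr (by omega)) fun j _ hj => ?_
        rw [pow_eq_zero_of_le (by simp at hj; omega) hK, smul_zero]
    _ = ∑ j ∈ range (k + 1), Ring.choose (k : ℝ) j • K ^ j := by
        refine (sum_subset (range_subset_range.mpr (by omega)) fun j _ hj => ?_).symm
        rw [Ring.choose_natCast, Nat.choose_eq_zero_of_lt (by simpa using hj), Nat.cast_zero,
          zero_smul]
    _ = _ := by
        refine sum_congr rfl fun j _ => ?_
        rw [Ring.choose_natCast, Nat.cast_smul_eq_nsmul, nsmul_eq_mul, one_pow, mul_one, mul_comm]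

lemma superPow_one_sub_one_pow {K : A} (hK : K ^ (n + 1) = 0) (p : ℝ) :
    (superPow n 1 K p - 1) ^ (n + 1) = 0 := by
  have hfactor : superPow n 1 K p - 1
      = K * ∑ j ∈ range n, Ring.choose p (j + 1) • K ^ j := by
    rw [superPow_one_eq_sum_choose, sum_range_succ', Ring.choose_zero_right, pow_zero, one_smul,
      add_sub_cancel_right, mul_sum]
    exact sum_congr rfl fun j _ => by rw [mul_smul_comm, ← pow_succ']
  rw [hfactor, mul_pow, hK, zero_mul]

lemma isPolynomialMap_superPow_one (K : A) : IsPolynomialMap fun x => superPow n 1 K x := by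
  simp only [superPow_one_eq_sum_choose]
  exact .sum _ fun j _ => .choose_smul j (K ^ j)

lemma IsPolynomialMap.superPow_one {f : ℝ → A} (hf : IsPolynomialMap f) (q : ℝ) :
    IsPolynomialMap fun x => superPow n 1 (f x) q := by
  simp only [superPow_one_eq_sum_choose]
  exact .sum _ fun j _ => (hf.pow j).const_smul _

theorem superPow_one_superPow_one_sub_one {K : A} (hK : K ^ (n + 1) = 0) (p q : ℝ) :
    superPow n 1 (superPow n 1 K p - 1) q = superPow n 1 K (p * q) := by
  have hnat (k l : ℕ) : superPow n 1 (superPow n 1 K k - 1) l = superPow n 1 K (k * l) := by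
    rw [superPow_one_natCast (superPow_one_sub_one_pow hK k), add_sub_cancel,
      superPow_one_natCast hK, ← Nat.cast_mul, superPow_one_natCast hK, pow_mul]
  have hq (k : ℕ) : (fun q => superPow n 1 (superPow n 1 K k - 1) q)
      = fun q => superPow n 1 K (k * q) :=
    IsPolynomialMap.eq_of_natCast (isPolynomialMap_superPow_one _)
      ((isPolynomialMap_superPow_one K).comp_mul k) (hnat k)
  have hp : (fun p => superPow n 1 (superPow n 1 K p - 1) q)
      = fun p => superPow n 1 K (p * q) := by
    refine IsPolynomialMap.eq_of_natCast
      (((isPolynomialMap_superPow_one K).sub (.const 1)).superPow_one q) ?_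
      fun k => congrFun (hq k) q
    simpa only [mul_comm] using (isPolynomialMap_superPow_one K).comp_mul q
  exact congrFun hp p

end superPow

/-- For `a = a₀ + N` with `a₀ > 0` and `N^(n+1) = 0`, the element `a^p` has body `a₀^p > 0`
and nilpotent part `a^p - a₀^p`, and one has `(a^p)^q = a^(pq)` for all real `p, q`. -/
theorem superPow_superPow {A : Type*} [CommRing A] [Algebra ℝ A] (n : ℕ)
    (a₀ : ℝ) (ha : 0 < a₀) (N : A) (hN : N ^ (n + 1) = 0) (p q : ℝ) :
    superPow n (a₀ ^ p) (superPow n a₀ N p - algebraMap ℝ A (a₀ ^ p)) q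
      = superPow n a₀ N (p * q) := by
  have hb : 0 < a₀ ^ p := Real.rpow_pos_of_pos ha p
  have hN' : (a₀⁻¹ • N) ^ (n + 1) = 0 := by rw [_root_.smul_pow, hN, smul_zero]
  have hbody :
      (a₀ ^ p)⁻¹ • (a₀ ^ p • superPow n 1 (a₀⁻¹ • N) p - algebraMap ℝ A (a₀ ^ p))
        = superPow n 1 (a₀⁻¹ • N) p - 1 := by
    rw [smul_sub, inv_smul_smul₀ hb.ne', Algebra.algebraMap_eq_smul_one, inv_smul_smul₀ hb.ne']
  rw [superPow_eq_rpow_smul hb, superPow_eq_rpow_smul ha N p, hbody,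
    superPow_one_superPow_one_sub_one hN', superPow_eq_rpow_smul ha N (p * q), Real.rpow_mul ha.le]
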